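/- Let c, d, k be positive integers with c ≥ 2, and let n = cd + c − 1. Suppose D is a subset of [n] of cardinality d + k that is not contained in any interval [A, f_c(A)] with A a d-subset of [n]. Then no superset of D is contained in any interval [A, f_c(A)] with A a d-subset of [n]. -/

import Mathlib

open Fin.NatCast

/-- The clockwise arc of `l` consecutive points on the circular representation of `[n]`
(modelled as `Fin n`), starting at `s`. -/
def cArc (n : ℕ) [NeZero n] (s : Fin n) (l : ℕ) : Finset (Fin n) :=
  (Finset.range l).image (fun t : ℕ => s + (t : Fin n))

/-- The interval `[A,B] = {C : A ⊆ C ⊆ B}` in the Boolean lattice of subsets of `[n]`. -/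
def fInterval {n : ℕ} (A B : Finset (Fin n)) : Finset (Finset (Fin n)) :=
  B.powerset.filter (fun C => A ⊆ C)

/-- A block structure of `A ⊆ [n]` with respect to the density `δ`: a partition of the
circular representation of `[n]` into clockwise-consecutive blocks
`B₁, G₁, B₂, G₂, …, B_k, G_k` satisfying conditions (i)-(iv). Block `Bᵢ` is the arc of
length `blen i` starting at `bstart i`, and the gap `Gᵢ` is the arc of length `glen i`
immediately following `Bᵢ`. -/
structure BlockStructure (n : ℕ) [NeZero n] (δ : ℝ) (A : Finset (Fin n)) where
  k : ℕ
  kpos : 0 < k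
  bstart : Fin k → Fin n
  blen : Fin k → ℕ
  glen : Fin k → ℕ
  blen_pos : ∀ i, 0 < blen i
  /-- the blocks and gaps are clockwise-consecutive: `B_{i+1}` starts right after `Gᵢ` -/
  consec : ∀ i : Fin k,
    bstart ⟨(i.val + 1) % k, Nat.mod_lt _ kpos⟩ = bstart i + ((blen i + glen i : ℕ) : Fin n)
  /-- (i) the first element of each block lies in `A` -/
  start_mem : ∀ i, bstart i ∈ A
  /-- (ii) the gaps contain no element of `A` -/
  gap_inter : ∀ i, Disjoint (cArc n (bstart i + (blen i : Fin n)) (glen i)) A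
  /-- the blocks and gaps cover `[n]` -/
  cover : ∀ x : Fin n,
    (∃ i, x ∈ cArc n (bstart i) (blen i)) ∨
      (∃ i, x ∈ cArc n (bstart i + (blen i : Fin n)) (glen i))
  /-- distinct blocks are disjoint -/
  block_disj : ∀ i j, i ≠ j →
    Disjoint (cArc n (bstart i) (blen i)) (cArc n (bstart j) (blen j))
  /-- distinct gaps are disjoint -/
  gap_disj : ∀ i j, i ≠ j →
    Disjoint (cArc n (bstart i + (blen i : Fin n)) (glen i))
      (cArc n (bstart j + (blen j : Fin n)) (glen j))
  /-- blocks are disjoint from gaps -/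
  block_gap_disj : ∀ i j,
    Disjoint (cArc n (bstart i) (blen i)) (cArc n (bstart j + (blen j : Fin n)) (glen j))
  /-- (iii) lower density bound: `δ·|A ∩ Bᵢ| − 1 < |Bᵢ|` -/
  density_lb : ∀ i,
    δ * ((A ∩ cArc n (bstart i) (blen i)).card : ℝ) - 1 < ((cArc n (bstart i) (blen i)).card : ℝ)
  /-- (iii) upper density bound: `|Bᵢ| ≤ δ·|A ∩ Bᵢ|` -/
  density_ub : ∀ i,
    ((cArc n (bstart i) (blen i)).card : ℝ) ≤ δ * ((A ∩ cArc n (bstart i) (blen i)).card : ℝ)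
  /-- (iv) every proper initial segment `[bᵢ,y] ⊊ Bᵢ` satisfies `|[bᵢ,y]| + 1 ≤ δ·|[bᵢ,y] ∩ A|` -/
  initial_seg : ∀ i, ∀ t : ℕ, t + 1 < blen i →
    ((cArc n (bstart i) (t + 1)).card : ℝ) + 1 ≤ δ * (((cArc n (bstart i) (t + 1)) ∩ A).card : ℝ)

namespace BlockStructure

variable {n : ℕ} [NeZero n] {δ : ℝ} {A : Finset (Fin n)}

/-- The block `Bᵢ`. -/
def block (P : BlockStructure n δ A) (i : Fin P.k) : Finset (Fin n) :=
  cArc n (P.bstart i) (P.blen i)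

/-- The gap `Gᵢ`. -/
def gap (P : BlockStructure n δ A) (i : Fin P.k) : Finset (Fin n) :=
  cArc n (P.bstart i + (P.blen i : Fin n)) (P.glen i)

/-- `𝒢_δ(A) = G₁ ∪ ⋯ ∪ G_k`, the union of the gaps. -/
def gapsUnion (P : BlockStructure n δ A) : Finset (Fin n) :=
  Finset.univ.biUnion P.gap

/-- `f_δ(A) = A ∪ 𝒢_δ(A)`. -/
def fset (P : BlockStructure n δ A) : Finset (Fin n) :=
  A ∪ P.gapsUnion

end BlockStructure

/-!
The set `f_c(A)` does not depend on the block structure: a point `z ∉ A` lies in a gap iff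
every clockwise arc ending at `z` has fewer than `|arc| / c` points of `A`. Indeed, whole blocks
have density exactly `1/c`, proper initial segments of blocks more than `1/c`, and gaps none, so
an arc ending in a gap has density below `1/c`, while the prefix of a block ending at `z` has
density at least `1/c`.

Now let `A ⊆ D' ⊆ f_c(A)` with `D ⊆ D'`. Match every point of `A \ D` with a point of `D \ A`
preceding it, always pairing a clockwise-closest pair; every arc ending at an unmatched point of
`D \ A` then contains at least as many points of `A \ D` as matched points. Replacing `A \ D` by
the matched points gives a `d`-set `A₀ ⊆ D` for which every point of `D \ A₀` is still sparse,
so `D ∈ [A₀, f_c(A₀)]`, contrary to the hypothesis.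
-/

open Finset Fin.CommRing

variable {n : ℕ} [NeZero n]

lemma mem_cArc {s x : Fin n} {l : ℕ} : x ∈ cArc n s l ↔ ∃ t < l, x = s + (t : Fin n) := by
  simp [cArc, eq_comm]

lemma cArc_mono (s : Fin n) {l₁ l₂ : ℕ} (h : l₁ ≤ l₂) : cArc n s l₁ ⊆ cArc n s l₂ :=
  image_subset_image (range_subset_range.2 h)

lemma card_cArc (s : Fin n) {l : ℕ} (hl : l ≤ n) : #(cArc n s l) = l := by
  rw [cArc, card_image_of_injOn, card_range]
  intro t₁ h₁ t₂ h₂ h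
  simp only [coe_range, Set.mem_Iio] at h₁ h₂
  have := congrArg Fin.val (add_left_cancel h)
  rwa [Fin.val_natCast, Fin.val_natCast, Nat.mod_eq_of_lt (by omega),
    Nat.mod_eq_of_lt (by omega)] at this

lemma min_le_card_cArc (s : Fin n) (l : ℕ) : min l n ≤ #(cArc n s l) :=
  calc min l n = #(cArc n s (min l n)) := (card_cArc s (min_le_right l n)).symm
    _ ≤ #(cArc n s l) := card_le_card (cArc_mono s (min_le_left l n))

def cArcEnd (z : Fin n) (l : ℕ) : Finset (Fin n) :=
  (range l).image fun t : ℕ => z - (t : Fin n)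

lemma mem_cArcEnd {x z : Fin n} {l : ℕ} : x ∈ cArcEnd z l ↔ (z - x).val < l := by
  simp only [cArcEnd, mem_image, mem_range]
  constructor
  · rintro ⟨t, ht, rfl⟩
    rw [sub_sub_cancel, Fin.val_natCast]
    exact (Nat.mod_le t n).trans_lt ht
  · exact fun h => ⟨(z - x).val, h, by rw [Fin.cast_val_eq_self, sub_sub_cancel]⟩

@[simp]
lemma cArcEnd_zero (z : Fin n) : cArcEnd z 0 = ∅ := by
  simp [cArcEnd]

lemma cArcEnd_succ (z : Fin n) (l : ℕ) : cArcEnd z (l + 1) = insert z (cArcEnd (z - 1) l) := by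
  rw [cArcEnd, range_add_one', image_insert, map_eq_image, image_image, cArcEnd]
  congr 2
  · simp
  · funext t
    show z - ((t + 1 : ℕ) : Fin n) = _
    push_cast
    ring

lemma cArc_eq_cArcEnd (s : Fin n) (t : ℕ) :
    cArc n s (t + 1) = cArcEnd (s + (t : Fin n)) (t + 1) := by
  ext x
  simp only [cArc, cArcEnd, mem_image, mem_range]
  constructor <;> rintro ⟨u, hu, rfl⟩ <;> refine ⟨t - u, by omega, ?_⟩ <;>
    rw [Nat.cast_sub (by omega)] <;> ring

lemma card_inter_cArcEnd_succ (A : Finset (Fin n)) (z : Fin n) {l : ℕ} (hl : l < n) :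
    #(A ∩ cArcEnd z (l + 1)) = #(A ∩ cArcEnd (z - 1) l) + if z ∈ A then 1 else 0 := by
  have hz : z ∉ cArcEnd (z - 1) l := by
    obtain ⟨m, rfl⟩ := Nat.exists_eq_add_one_of_ne_zero (NeZero.ne n)
    rw [mem_cArcEnd, sub_sub_cancel_left, Fin.coe_neg_one]
    omega
  rw [cArcEnd_succ, insert_inter]
  split_ifs with h
  · rw [card_insert_of_notMem (fun h' => hz (mem_inter.1 h').2)]
  · rfl

lemma val_sub_lt_val_sub {u z t : Fin n} (hzu : z ≠ u) (htu : t ≠ u)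
    (hmin : (t - u).val ≤ (t - z).val) : (z - t).val < (z - u).val := by
  rw [show z - t = (z - u) - (t - u) by abel]
  rw [show t - z = (t - u) - (z - u) by abel] at hmin
  have ha : (z - u).val ≠ 0 := Fin.val_ne_iff.2 (sub_ne_zero.2 hzu)
  have hb : (t - u).val ≠ 0 := Fin.val_ne_iff.2 (sub_ne_zero.2 htu)
  generalize z - u = a at *
  generalize t - u = b at *
  rcases le_or_gt b a with h | h
  · rw [Fin.coe_sub_iff_le.2 h]
    omega
  · rw [Fin.coe_sub_iff_le.2 h.le] at hmin
    omega

theorem exists_subset_card_inter_cArcEnd_le {T U : Finset (Fin n)} (hTU : Disjoint T U)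
    (hcard : #T ≤ #U) :
    ∃ S ⊆ U, #S = #T ∧ ∀ z ∈ U \ S, ∀ l, #(S ∩ cArcEnd z l) ≤ #(T ∩ cArcEnd z l) := by
  induction hm : #T generalizing T U with
  | zero => exact ⟨∅, empty_subset U, rfl, by simp⟩
  | succ m ih =>
    have hT : T.Nonempty := card_pos.1 (by omega)
    have hU : U.Nonempty := card_pos.1 (by omega)
    -- a closest pair: no point of `T ∪ U` lies strictly between `u` and `t` clockwise
    obtain ⟨⟨t, u⟩, htu, hmin⟩ :=
      exists_min_image (T ×ˢ U) (fun p => (p.1 - p.2).val) (hT.product hU)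
    obtain ⟨ht, hu⟩ := mem_product.1 htu
    obtain ⟨S, hSU, hS, hSle⟩ := ih (hTU.mono (erase_subset t T) (erase_subset u U))
      (by rw [card_erase_of_mem ht, card_erase_of_mem hu]; omega)
      (by rw [card_erase_of_mem ht]; omega)
    have huS : u ∉ S := fun h => (mem_erase.1 (hSU h)).1 rfl
    refine ⟨insert u S, insert_subset hu (hSU.trans (erase_subset u U)), ?_, ?_⟩
    · rw [card_insert_of_notMem huS, hS]
    intro z hz l
    obtain ⟨hzU, hzS⟩ := mem_sdiff.1 hz
    have hzu : z ≠ u := fun h => hzS (h ▸ mem_insert_self u S)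
    have hle := hSle z (mem_sdiff.2 ⟨mem_erase.2 ⟨hzu, hzU⟩, fun h => hzS (mem_insert_of_mem h)⟩) l
    by_cases huz : u ∈ cArcEnd z l
    · have htz : t ∈ cArcEnd z l := by
        have htu : t ≠ u := fun h => disjoint_left.1 hTU ht (h ▸ hu)
        have := val_sub_lt_val_sub hzu htu (hmin (t, z) (mem_product.2 ⟨ht, hzU⟩))
        rw [mem_cArcEnd] at huz ⊢
        omega
      have hcardT : #(T.erase t ∩ cArcEnd z l) + 1 = #(T ∩ cArcEnd z l) := by
        rw [erase_inter, card_erase_add_one (mem_inter.2 ⟨ht, htz⟩)]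
      rw [insert_inter_of_mem huz, card_insert_of_notMem fun h => huS (mem_inter.1 h).1]
      omega
    · rw [insert_inter_of_notMem huz]
      exact hle.trans (card_le_card (inter_subset_inter_right (erase_subset t T)))

def ArcSparse (c : ℕ) (A : Finset (Fin n)) (z : Fin n) : Prop :=
  ∀ l, 0 < l → l ≤ n → c * #(A ∩ cArcEnd z l) < l

lemma ArcSparse.of_card_inter_le {c : ℕ} {A B : Finset (Fin n)} {z : Fin n}
    (h : ArcSparse c A z) (hBA : ∀ l, #(B ∩ cArcEnd z l) ≤ #(A ∩ cArcEnd z l)) :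
    ArcSparse c B z :=
  fun l hl hln => (Nat.mul_le_mul_left c (hBA l)).trans_lt (h l hl hln)

namespace BlockStructure

variable {c : ℕ} {A : Finset (Fin n)} (P : BlockStructure n (c : ℝ) A)

lemma card_block_le (i : Fin P.k) : #(P.block i) ≤ c * #(A ∩ P.block i) := by
  exact_mod_cast P.density_ub i

lemma mul_card_inter_block_le (i : Fin P.k) : c * #(A ∩ P.block i) ≤ #(P.block i) := by
  have h : ((c * #(A ∩ P.block i) : ℕ) : ℝ) < (#(P.block i) + 1 : ℕ) := by
    have := P.density_lb i
    unfold block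
    push_cast
    linarith
  exact Nat.lt_add_one_iff.1 (by exact_mod_cast h)

lemma blen_lt (hcA : c * #A < n) (i : Fin P.k) : P.blen i < n := by
  by_contra! h
  have h₁ := min_le_card_cArc (P.bstart i) (P.blen i)
  rw [min_eq_right h] at h₁
  have h₂ : c * #(A ∩ P.block i) ≤ c * #A := Nat.mul_le_mul_left c (card_le_card inter_subset_left)
  have h₃ := P.card_block_le i
  unfold block at h₂ h₃
  omega

lemma card_block (hcA : c * #A < n) (i : Fin P.k) : #(P.block i) = P.blen i :=
  card_cArc _ (P.blen_lt hcA i).le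

lemma succ_le_mul_card_inter_cArcEnd (hcA : c * #A < n) {i : Fin P.k} {t : ℕ}
    (ht : t < P.blen i) :
    t + 1 ≤ c * #(A ∩ cArcEnd (P.bstart i + (t : Fin n)) (t + 1)) := by
  rw [← cArc_eq_cArcEnd]
  rcases (show t + 1 ≤ P.blen i from ht).lt_or_eq with h | h
  · have h' := P.initial_seg i t h
    rw [card_cArc _ (by have := P.blen_lt hcA i; omega), inter_comm] at h'
    have : ((t + 1 + 1 : ℕ) : ℝ) ≤ ((c * #(A ∩ cArc n (P.bstart i) (t + 1)) : ℕ) : ℝ) := by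
      push_cast at h' ⊢
      linarith
    exact (Nat.le_succ _).trans (by exact_mod_cast this)
  · rw [h]
    exact (P.card_block hcA i).symm.le.trans (P.card_block_le i)

lemma exists_bstart_eq (i : Fin P.k) :
    ∃ j, P.bstart i = P.bstart j + ((P.blen j + P.glen j : ℕ) : Fin n) := by
  have hk := P.kpos
  refine ⟨⟨(i + (P.k - 1)) % P.k, Nat.mod_lt _ hk⟩, ?_⟩
  rw [← P.consec]
  congr
  refine Fin.ext ?_
  dsimp only
  rw [Nat.mod_add_mod, show i + (P.k - 1) + 1 = i + P.k by omega, Nat.add_mod_right,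
    Nat.mod_eq_of_lt i.isLt]

def blockLast (i : Fin P.k) : Fin n :=
  P.bstart i + ((P.blen i - 1 : ℕ) : Fin n)

def blockLasts : Finset (Fin n) :=
  univ.image P.blockLast

lemma blockLast_mem_blockLasts (i : Fin P.k) : P.blockLast i ∈ P.blockLasts :=
  mem_image_of_mem _ (mem_univ i)

lemma sub_one_mem_of_mem_gapsUnion {z : Fin n} (hz : z ∈ P.gapsUnion) :
    z - 1 ∈ P.gapsUnion ∪ P.blockLasts := by
  obtain ⟨i, -, hzi⟩ := mem_biUnion.1 hz
  obtain ⟨p, hp, rfl⟩ := mem_cArc.1 hzi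
  rcases p with _ | p
  · refine mem_union_right _ ?_
    convert P.blockLast_mem_blockLasts i using 1
    rw [blockLast, Nat.cast_pred (P.blen_pos i)]
    ring
  · refine mem_union_left _ (mem_biUnion.2 ⟨i, mem_univ i, mem_cArc.2 ⟨p, by omega, ?_⟩⟩)
    push_cast
    ring

lemma bstart_sub_one_mem (i : Fin P.k) : P.bstart i - 1 ∈ P.gapsUnion ∪ P.blockLasts := by
  obtain ⟨j, hj⟩ := P.exists_bstart_eq i
  rw [hj]
  rcases Nat.eq_zero_or_pos (P.glen j) with h | h
  · refine mem_union_right _ ?_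
    convert P.blockLast_mem_blockLasts j using 1
    rw [blockLast, h, add_zero, Nat.cast_pred (P.blen_pos j)]
    ring
  · refine mem_union_left _
      (mem_biUnion.2 ⟨j, mem_univ j, mem_cArc.2 ⟨P.glen j - 1, by omega, ?_⟩⟩)
    rw [Nat.cast_pred h]
    push_cast
    ring

lemma notMem_of_mem_gapsUnion {z : Fin n} (hz : z ∈ P.gapsUnion) : z ∉ A := by
  obtain ⟨i, -, hzi⟩ := mem_biUnion.1 hz
  exact disjoint_left.1 (P.gap_inter i) hzi

lemma mul_card_inter_cArcEnd_succ_le_of_mem_gapsUnion {z : Fin n} {l : ℕ}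
    (hz : z ∈ P.gapsUnion) (hl : l < n)
    (hprev : ∀ w ∈ P.gapsUnion ∪ P.blockLasts, c * #(A ∩ cArcEnd w l) ≤ l) :
    c * #(A ∩ cArcEnd z (l + 1)) ≤ l := by
  rw [card_inter_cArcEnd_succ A z hl, if_neg (P.notMem_of_mem_gapsUnion hz), add_zero]
  exact hprev _ (P.sub_one_mem_of_mem_gapsUnion hz)

/-- The excess `c * #(A ∩ arc) - #arc` of an arc ending at a point is at most that of the
block prefix ending there, and at most `0` at gap points and at the last points of blocks. -/
theorem mul_card_inter_cArcEnd_le (hcA : c * #A < n) {l : ℕ} (hl : l ≤ n) :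
    (∀ i t, t < P.blen i →
      c * #(A ∩ cArcEnd (P.bstart i + (t : Fin n)) l) + (t + 1) ≤
        l + c * #(A ∩ cArcEnd (P.bstart i + (t : Fin n)) (t + 1))) ∧
    ∀ w ∈ P.gapsUnion ∪ P.blockLasts, c * #(A ∩ cArcEnd w l) ≤ l := by
  induction l with
  | zero =>
    refine ⟨fun i t ht => ?_, fun w _ => by simp⟩
    simpa using P.succ_le_mul_card_inter_cArcEnd hcA ht
  | succ l ih =>
    have hl' : l < n := hl
    obtain ⟨hblock, hrest⟩ := ih hl'.le
    have hblock' : ∀ i t, t < P.blen i →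
        c * #(A ∩ cArcEnd (P.bstart i + (t : Fin n)) (l + 1)) + (t + 1) ≤
          l + 1 + c * #(A ∩ cArcEnd (P.bstart i + (t : Fin n)) (t + 1)) := by
      rintro i (_ | t) ht
      · have hprev := hrest _ (P.bstart_sub_one_mem i)
        rw [Nat.cast_zero, add_zero, card_inter_cArcEnd_succ A _ hl',
          card_inter_cArcEnd_succ A _ (Nat.pos_of_neZero n), if_pos (P.start_mem i),
          cArcEnd_zero, inter_empty, card_empty]
        nlinarith
      · have hprev := hblock i t (by omega)
        have hsub : P.bstart i + ((t + 1 : ℕ) : Fin n) - 1 = P.bstart i + (t : Fin n) := by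
          push_cast
          ring
        rw [card_inter_cArcEnd_succ A _ hl', card_inter_cArcEnd_succ A _ (by
          have := P.blen_lt hcA i; omega), hsub]
        nlinarith
    refine ⟨hblock', fun w hw => ?_⟩
    rcases mem_union.1 hw with hw | hw
    · exact (P.mul_card_inter_cArcEnd_succ_le_of_mem_gapsUnion hw hl' hrest).trans (Nat.le_succ l)
    · obtain ⟨i, -, rfl⟩ := mem_image.1 hw
      have hpos : 1 ≤ P.blen i := P.blen_pos i
      have hlast := hblock' i (P.blen i - 1) (by omega)
      have hfull := P.mul_card_inter_block_le i
      rw [P.card_block hcA, block, ← Nat.sub_add_cancel hpos, cArc_eq_cArcEnd] at hfull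
      rw [Nat.sub_add_cancel hpos] at hlast hfull
      unfold blockLast
      omega

lemma arcSparse_of_mem_gapsUnion (hcA : c * #A < n) {z : Fin n} (hz : z ∈ P.gapsUnion) :
    ArcSparse c A z := by
  rintro (_ | l) hl hln
  · omega
  · exact (P.mul_card_inter_cArcEnd_succ_le_of_mem_gapsUnion hz hln
      (P.mul_card_inter_cArcEnd_le hcA (by omega)).2).trans_lt (Nat.lt_succ_self l)

lemma not_arcSparse_of_mem_block (hcA : c * #A < n) {i : Fin P.k} {z : Fin n}
    (hz : z ∈ P.block i) : ¬ ArcSparse c A z := by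
  obtain ⟨t, ht, rfl⟩ := mem_cArc.1 hz
  intro h
  have := h (t + 1) t.succ_pos (by have := P.blen_lt hcA i; omega)
  have := P.succ_le_mul_card_inter_cArcEnd hcA ht
  omega

theorem mem_fset_iff (hcA : c * #A < n) {z : Fin n} : z ∈ P.fset ↔ z ∈ A ∨ ArcSparse c A z := by
  rw [fset, mem_union]
  refine or_congr_right' fun hzA => ⟨P.arcSparse_of_mem_gapsUnion hcA, fun h => ?_⟩
  rcases P.cover z with ⟨i, hi⟩ | ⟨i, hi⟩
  · exact absurd h (P.not_arcSparse_of_mem_block hcA hi)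
  · exact mem_biUnion.2 ⟨i, mem_univ i, hi⟩

end BlockStructure

lemma card_inter_union_inter_le {α : Type*} [DecidableEq α] {A D S X : Finset α}
    (h : #(S ∩ X) ≤ #((A \ D) ∩ X)) :
    #((A ∩ D ∪ S) ∩ X) ≤ #(A ∩ X) :=
  calc #((A ∩ D ∪ S) ∩ X) ≤ #(A ∩ D ∩ X) + #(S ∩ X) := by
        rw [union_inter_distrib_right]
        exact card_union_le _ _
    _ ≤ #(A ∩ X ∩ D) + #((A ∩ X) \ D) := by
        rw [inter_right_comm, ← sdiff_inter_right_comm]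
        omega
    _ = #(A ∩ X) := card_inter_add_card_sdiff _ _

theorem exists_subset_card_eq_arcSparse {c : ℕ} {A D : Finset (Fin n)} (hAD : #A ≤ #D)
    (hsparse : ∀ z ∈ D \ A, ArcSparse c A z) :
    ∃ A₀ ⊆ D, #A₀ = #A ∧ ∀ z ∈ D \ A₀, ArcSparse c A₀ z := by
  obtain ⟨S, hSU, hScard, hSle⟩ := exists_subset_card_inter_cArcEnd_le
    (disjoint_sdiff_sdiff : Disjoint (A \ D) (D \ A)) (card_sdiff_le_card_sdiff_iff.2 hAD)
  refine ⟨A ∩ D ∪ S, union_subset inter_subset_right (hSU.trans sdiff_subset), ?_, fun z hz => ?_⟩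
  · rw [card_union_of_disjoint (disjoint_sdiff.mono inter_subset_left hSU), hScard,
      card_inter_add_card_sdiff]
  obtain ⟨hzD, hzA₀⟩ := mem_sdiff.1 hz
  have hzA : z ∉ A := fun h => hzA₀ (mem_union_left _ (mem_inter.2 ⟨h, hzD⟩))
  have hzS : z ∈ (D \ A) \ S :=
    mem_sdiff.2 ⟨mem_sdiff.2 ⟨hzD, hzA⟩, fun h => hzA₀ (mem_union_right _ h)⟩
  exact (hsparse z (mem_sdiff.2 ⟨hzD, hzA⟩)).of_card_inter_le fun l =>
    card_inter_union_inter_le (hSle z hzS l)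

theorem uncovered_top_general (c d k n : ℕ) (hc : 2 ≤ c)
    (hn : n = c * d + c - 1) [NeZero n]
    (F : Finset (Fin n) → Finset (Fin n))
    (hF : ∀ A : Finset (Fin n), A.card = d → ∃ P : BlockStructure n (c : ℝ) A, F A = P.fset)
    (D : Finset (Fin n)) (hDcard : D.card = d + k)
    (hD : ∀ A : Finset (Fin n), A.card = d → D ∉ fInterval A (F A)) :
    ∀ D' : Finset (Fin n), D ⊆ D' →
      ∀ A : Finset (Fin n), A.card = d → D' ∉ fInterval A (F A) := by
  intro D' hDD' A hA hmem
  obtain ⟨hD'F, -⟩ : D' ⊆ F A ∧ A ⊆ D' := by simpa [fInterval] using hmem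
  have hcd : c * d < n := by omega
  have hF_iff {B : Finset (Fin n)} (hB : #B = d) (z : Fin n) :
      z ∈ F B ↔ z ∈ B ∨ ArcSparse c B z := by
    obtain ⟨P, hP⟩ := hF B hB
    rw [hP]
    exact P.mem_fset_iff (hB ▸ hcd)
  obtain ⟨A₀, hA₀D, hA₀, hsparse⟩ := exists_subset_card_eq_arcSparse (by omega)
    fun z hz => ((hF_iff hA z).1 (hD'F (hDD' (mem_sdiff.1 hz).1))).resolve_left (mem_sdiff.1 hz).2
  refine hD A₀ (hA₀.trans hA) ?_
  simp only [fInterval, mem_filter, mem_powerset]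
  refine ⟨fun z hz => (hF_iff (hA₀.trans hA) z).2 ?_, hA₀D⟩
  by_cases hzA₀ : z ∈ A₀
  · exact Or.inl hzA₀
  · exact Or.inr (hsparse z (mem_sdiff.2 ⟨hz, hzA₀⟩))

/-- (Lemma "uncovered top") Let `c, d, k` be positive integers with `c ≥ 2`
and `n = cd + c − 1`. If `D ⊆ [n]` with `|D| = d + k` is not contained in any interval
`[A, f_c(A)]` with `A` a `d`-subset of `[n]`, then no superset of `D` is contained in any
such interval. Here `F` assigns to each `d`-subset `A` the set `f_c(A)` coming from a block
structure of `A` with density `c`. -/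
theorem uncovered_top (c d k n : ℕ) (hc : 2 ≤ c) (hd : 0 < d) (hk : 0 < k)
    (hn : n = c * d + c - 1) [NeZero n]
    (F : Finset (Fin n) → Finset (Fin n))
    (hF : ∀ A : Finset (Fin n), A.card = d → ∃ P : BlockStructure n (c : ℝ) A, F A = P.fset)
    (D : Finset (Fin n)) (hDcard : D.card = d + k)
    (hD : ∀ A : Finset (Fin n), A.card = d → D ∉ fInterval A (F A)) :
    ∀ D' : Finset (Fin n), D ⊆ D' →
      ∀ A : Finset (Fin n), A.card = d → D' ∉ fInterval A (F A) :=
  uncovered_top_general c d k n hc hn F hF D hDcard hD
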